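/- The Nijenhuis tensor N(X,Y) = 2([JX,JY]_m - [X,Y]_m - J([X,JY]_m) - J([JX,Y]_m)) of the almost complex structure J on diff_0(S^1) vanishes identically. In particular N(f_m, f_n) = N(f_m, g_n) = N(g_m, g_n) = 0 for all m, n ≥ 1. -/

import Mathlib

/-- index type for the basis `{f_{k+1}} ∪ {g_{k+1}}` of `diff_0(S¹)`:
`Sum.inl k` stands for `f_{k+1} = cos((k+1)t)`, `Sum.inr k` for `g_{k+1} = sin((k+1)t)`. -/
abbrev Idx := ℕ ⊕ ℕ

/-- `diff_0(S¹)`, modelled as the free vector space on the basis `{f_k, g_k : k ≥ 1}`. -/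
abbrev V := Idx →₀ ℝ

/-- `f_k = cos(kt)` as an element of `diff_0(S¹)` (with `f_0` projected to `0`). -/
noncomputable def Fb : ℕ → V := fun k =>
  if k = 0 then 0 else Finsupp.single (Sum.inl (k - 1)) 1

/-- `g_k = sin(kt)` as an element of `diff_0(S¹)` (with `g_0 = 0`). -/
noncomputable def Gb : ℕ → V := fun k =>
  if k = 0 then 0 else Finsupp.single (Sum.inr (k - 1)) 1

/-- `θ_k = 2hk + (c/12)(k³ - k)` -/
noncomputable def th (c h : ℝ) (k : ℤ) : ℝ := 2 * h * k + c / 12 * ((k : ℝ) ^ 3 - k)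

/-- `λ_{m,n} = (2n+m)θ_m / (2θ_{m+n})` -/
noncomputable def lam (c h : ℝ) (m n : ℤ) : ℝ :=
  (2 * (n : ℝ) + m) * th c h m / (2 * th c h (m + n))

/-- `|M - N|` for natural numbers -/
def dN (M N : ℕ) : ℕ := max M N - min M N

/-- `sign (M - N)` -/
noncomputable def sg (M N : ℕ) : ℝ := if N < M then 1 else -1

/-- the projected bracket `[·,·]_m` on basis elements, given by
`[f_M, f_N]_m = ((M-N)/2) g_{M+N} + ((M+N)/2) sign(M-N) g_{|M-N|}`,
`[g_M, g_N]_m = ((N-M)/2) g_{M+N} + ((M+N)/2) sign(M-N) g_{|M-N|}`,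
`[f_M, g_N]_m = ((N-M)/2) f_{M+N} + ((M+N)/2) f_{|M-N|}` (the `f_0` term being projected away),
and `[g_M, f_N]_m = -[f_N, g_M]_m`. -/
noncomputable def brB : Idx → Idx → V
  | Sum.inl m, Sum.inl n =>
      (((m : ℝ) - n) / 2) • Gb (m + n + 2)
        + (((m : ℝ) + n + 2) / 2 * sg (m + 1) (n + 1)) • Gb (dN (m + 1) (n + 1))
  | Sum.inl m, Sum.inr n =>
      (((n : ℝ) - m) / 2) • Fb (m + n + 2)
        + (((m : ℝ) + n + 2) / 2) • Fb (dN (m + 1) (n + 1))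
  | Sum.inr m, Sum.inl n =>
      -((((m : ℝ) - n) / 2) • Fb (m + n + 2)
        + (((m : ℝ) + n + 2) / 2) • Fb (dN (m + 1) (n + 1)))
  | Sum.inr m, Sum.inr n =>
      (((n : ℝ) - m) / 2) • Gb (m + n + 2)
        + (((m : ℝ) + n + 2) / 2 * sg (m + 1) (n + 1)) • Gb (dN (m + 1) (n + 1))

/-- bilinear extension of a map given on basis elements -/
noncomputable def bil (φ : Idx → Idx → V) (x y : V) : V :=
  x.sum fun i a => y.sum fun j b => (a * b) • φ i j

/-- the projected (mean-zero) bracket `[·,·]_m` on `diff_0(S¹)` -/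
noncomputable def brm : V → V → V := bil brB

/-- the inner product `B` on basis elements: `B(f_M, f_N) = B(g_M, g_N) = (θ_M/2)δ_{M,N}`,
`B(f_M, g_N) = 0`. -/
noncomputable def ipB (c h : ℝ) : Idx → Idx → ℝ
  | Sum.inl m, Sum.inl n => if m = n then th c h (m + 1) / 2 else 0
  | Sum.inr m, Sum.inr n => if m = n then th c h (m + 1) / 2 else 0
  | _, _ => 0

/-- the inner product `B(f,g) = ω_{c,h}(f, Jg)` on `diff_0(S¹)` -/
noncomputable def Bf (c h : ℝ) (x y : V) : ℝ :=
  x.sum fun i a => y.sum fun j b => a * b * ipB c h i j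

/-- the almost complex structure `J` on basis elements: `J f_k = -g_k`, `J g_k = f_k` -/
noncomputable def JB : Idx → V
  | Sum.inl k => -(Finsupp.single (Sum.inr k) 1)
  | Sum.inr k => Finsupp.single (Sum.inl k) 1

/-- the almost complex structure `J` on `diff_0(S¹)` -/
noncomputable def Jm (x : V) : V := x.sum fun i a => a • JB i

/-- the Nijenhuis tensor
`N(X,Y) = 2([JX,JY]_m - [X,Y]_m - J([X,JY]_m) - J([JX,Y]_m))` -/
noncomputable def Nij (x y : V) : V :=
  (2 : ℝ) • (brm (Jm x) (Jm y) - brm x y - Jm (brm x (Jm y)) - Jm (brm (Jm x) y))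

/-!
`J` and `[·,·]_m` are (bi)linear, so `N` is bilinear and it suffices to check it on pairs of
basis vectors. There the `|M-N|` terms cancel inside `[g_M,g_N]_m - [f_M,f_N]_m` and inside
`[f_M,g_N]_m - [f_N,g_M]_m`, and the remaining `(M+N)`-frequency terms of these two
differences cancel each other after one of them is hit by `J`.
-/

open Finsupp

noncomputable def bilOfBasis (φ : Idx → Idx → V) : V →ₗ[ℝ] V →ₗ[ℝ] V :=
  linearCombination ℝ fun i => linearCombination ℝ (φ i)

lemma bil_eq_bilOfBasis (φ : Idx → Idx → V) (x y : V) : bil φ x y = bilOfBasis φ x y := by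
  simp only [bil, bilOfBasis, linearCombination_apply, LinearMap.finsupp_sum_apply,
    LinearMap.smul_apply, smul_sum, mul_smul]

lemma bilOfBasis_single_single (φ : Idx → Idx → V) (i j : Idx) :
    bilOfBasis φ (single i 1) (single j 1) = φ i j := by
  simp [bilOfBasis]

lemma Nij_eq_bilOfBasis (x y : V) :
    let J : V →ₗ[ℝ] V := linearCombination ℝ JB
    let B : V →ₗ[ℝ] V →ₗ[ℝ] V := bilOfBasis brB
    Nij x y = (2 : ℝ) • (B (J x) (J y) - B x y - J (B x (J y)) - J (B (J x) y)) := by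
  simp only [Nij, brm, bil_eq_bilOfBasis, Jm, linearCombination_apply]

noncomputable def nijBilin : V →ₗ[ℝ] V →ₗ[ℝ] V :=
  LinearMap.mk₂ ℝ Nij
    (fun _ _ _ => by simp only [Nij_eq_bilOfBasis, map_add, LinearMap.add_apply]; module)
    (fun _ _ _ => by simp only [Nij_eq_bilOfBasis, map_smul, LinearMap.smul_apply]; module)
    (fun _ _ _ => by simp only [Nij_eq_bilOfBasis, map_add]; module)
    (fun _ _ _ => by simp only [Nij_eq_bilOfBasis, map_smul]; module)

lemma linearCombination_JB_Fb (k : ℕ) : linearCombination ℝ JB (Fb k) = -Gb k := by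
  unfold Fb Gb
  split_ifs <;> simp [JB]

lemma linearCombination_JB_Gb (k : ℕ) : linearCombination ℝ JB (Gb k) = Fb k := by
  unfold Fb Gb
  split_ifs <;> simp [JB]

lemma Nij_single_single (i j : Idx) : Nij (single i 1) (single j 1) = 0 := by
  rcases i with m | m <;> rcases j with n | n <;>
    simp only [Nij_eq_bilOfBasis, linearCombination_single, one_smul, JB, map_neg, LinearMap.neg_apply,
      bilOfBasis_single_single, neg_neg] <;>
    simp only [brB, map_add, map_smul, map_neg, linearCombination_JB_Fb, linearCombination_JB_Gb] <;>
    module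

lemma nijBilin_eq_zero : nijBilin = 0 :=
  LinearMap.ext_basis Finsupp.basisSingleOne Finsupp.basisSingleOne fun i j => by
    simpa [nijBilin] using Nij_single_single i j

/-- The Nijenhuis tensor of `J` vanishes identically on `diff_0(S¹)`;
in particular it vanishes on the basis elements. -/
theorem nijenhuis_vanishes :
    (∀ x y : V, Nij x y = 0) ∧
    (∀ m n : ℕ, 1 ≤ m → 1 ≤ n →
      Nij (Fb m) (Fb n) = 0 ∧ Nij (Fb m) (Gb n) = 0 ∧ Nij (Gb m) (Gb n) = 0) := by
  have h : ∀ x y : V, Nij x y = 0 := fun x y => by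
    simpa [nijBilin] using LinearMap.congr_fun₂ nijBilin_eq_zero x y
  exact ⟨h, fun m n _ _ => ⟨h _ _, h _ _, h _ _⟩⟩
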